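/- arXiv:math/0410616 — 3 statements merged into one kernel-verified Lean document; each statement's English description precedes it below -/
import Mathlib

section
/- The lamplighter group L_m = ℤ_m ≀ ℤ (m ≥ 2) with generating set {a, t} has no regular language of geodesics: there is no regular language L over {a^{±1}, t^{±1}} such that every word in L is geodesic and every element of L_m has at least one representative in L. -/
open scoped commutatorElement

/-- Relators for the lamplighter group `L_m = ℤ_m ≀ ℤ` in the wreath product
presentation `⟨a, t | a^m, [t^i a t^{-i}, t^j a t^{-j}]⟩`, where `a` is encoded
by `true` and `t` by `false`. -/
def lampRels (m : ℕ) : Set (FreeGroup Bool) :=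
  {FreeGroup.of true ^ m} ∪
  {r | ∃ i j : ℤ,
    r = ⁅FreeGroup.of false ^ i * FreeGroup.of true * FreeGroup.of false ^ (-i),
        FreeGroup.of false ^ j * FreeGroup.of true * FreeGroup.of false ^ (-j)⁆}

/-- The lamplighter group `L_m = ℤ_m ≀ ℤ`. -/
abbrev Lamp (m : ℕ) := PresentedGroup (lampRels m)

/-- The generator `a` of `L_m`. -/
noncomputable def la (m : ℕ) : Lamp m := PresentedGroup.of true

/-- The generator `t` of `L_m`. -/
noncomputable def lt (m : ℕ) : Lamp m := PresentedGroup.of false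

/-- Word length of `g` with respect to the generating set `S` (and inverses):
the least length of a list of elements of `S ∪ S⁻¹` with product `g`. -/
noncomputable def wordLength {G : Type*} [Group G] (S : Set G) (g : G) : ℕ :=
  sInf {n | ∃ l : List G, (∀ x ∈ l, x ∈ S ∨ x⁻¹ ∈ S) ∧ l.length = n ∧ l.prod = g}

/-!
Send `L_m` to the concrete model of pairs (lamp configuration `ℤ → ZMod m`, cursor position).
For `j ≥ k + 2` the word `t⁻¹ a t^j a t^{-k}` is the unique geodesic of its element: any word for
it reads `a^{±1}` with the cursor at `-1` and at `j - 1`, and taking the lamp at `j - 1` first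
needs more cursor moves. So a geodesic language representing every element contains all of these
words, whereas `t⁻¹ a t^j a t^{-j} = t^{j-1} a t^{-j} a` is not geodesic. A regular language has
finitely many left quotients, so two prefixes `t⁻¹ a t^j a` and `t⁻¹ a t^k a` with `j ≥ k + 2`
have the same one, and appending `t^{-k}` gives the contradiction.
-/

def zigzagWord {α : Type*} (x y t t' : α) (j k : ℕ) : List α :=
  [t', x] ++ List.replicate j t ++ [y] ++ List.replicate k t'

@[simp] lemma length_zigzagWord {α : Type*} (x y t t' : α) (j k : ℕ) :
    (zigzagWord x y t t' j k).length = j + k + 3 := by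
  simp [zigzagWord]
  omega

lemma wordLength_le_length {G : Type*} [Group G] {S : Set G}
    (w : List {x : G // x ∈ S ∨ x⁻¹ ∈ S}) : wordLength S (w.map Subtype.val).prod ≤ w.length :=
  Nat.sInf_le ⟨w.map Subtype.val, by simp +contextual, List.length_map _, rfl⟩

@[ext]
structure LampModel (m : ℕ) where
  lamps : ℤ → ZMod m
  cursor : ℤ

namespace LampModel

variable {m : ℕ}

instance : Mul (LampModel m) :=
  ⟨fun g h => ⟨fun s => g.lamps s + h.lamps (s - g.cursor), g.cursor + h.cursor⟩⟩
instance : One (LampModel m) := ⟨⟨0, 0⟩⟩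
instance : Inv (LampModel m) := ⟨fun g => ⟨fun s => -g.lamps (s + g.cursor), -g.cursor⟩⟩

@[simp] lemma mul_lamps (g h : LampModel m) (s : ℤ) :
    (g * h).lamps s = g.lamps s + h.lamps (s - g.cursor) := rfl
@[simp] lemma mul_cursor (g h : LampModel m) : (g * h).cursor = g.cursor + h.cursor := rfl
@[simp] lemma one_lamps (s : ℤ) : (1 : LampModel m).lamps s = 0 := rfl
@[simp] lemma one_cursor : (1 : LampModel m).cursor = 0 := rfl
@[simp] lemma inv_lamps (g : LampModel m) (s : ℤ) : g⁻¹.lamps s = -g.lamps (s + g.cursor) := rfl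
@[simp] lemma inv_cursor (g : LampModel m) : g⁻¹.cursor = -g.cursor := rfl

instance : Group (LampModel m) where
  mul_assoc g h k := by
    ext s
    · simp only [mul_lamps, mul_cursor, sub_sub, add_assoc]
    · simp only [mul_cursor, add_assoc]
  one_mul g := by ext s <;> simp
  mul_one g := by ext s <;> simp
  inv_mul_cancel g := by ext s <;> simp

def a : LampModel m := ⟨Pi.single 0 1, 0⟩
def t : LampModel m := ⟨0, 1⟩

@[simp] lemma a_lamps : (a : LampModel m).lamps = Pi.single 0 1 := rfl
@[simp] lemma a_cursor : (a : LampModel m).cursor = 0 := rfl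
@[simp] lemma t_lamps : (t : LampModel m).lamps = 0 := rfl
@[simp] lemma t_cursor : (t : LampModel m).cursor = 1 := rfl

@[simp] lemma t_zpow (n : ℤ) : (t : LampModel m) ^ n = ⟨0, n⟩ := by
  induction n using Int.induction_on with
  | zero => rfl
  | succ n ih => rw [zpow_add_one, ih]; ext s <;> simp
  | pred n ih => rw [zpow_sub_one, ih]; ext s <;> simp [sub_eq_add_neg]

@[simp] lemma t_pow (n : ℕ) : (t : LampModel m) ^ n = ⟨0, n⟩ := by
  rw [← zpow_natCast, t_zpow]

lemma a_pow (n : ℕ) : (a : LampModel m) ^ n = ⟨Pi.single 0 n, 0⟩ := by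
  induction n with
  | zero => ext s <;> simp
  | succ n ih =>
    rw [pow_succ, ih]
    ext s
    · by_cases hs : s = 0 <;> simp [hs]
    · simp

lemma commute_of_cursor_eq_zero {g h : LampModel m} (hg : g.cursor = 0) (hh : h.cursor = 0) :
    Commute g h := by
  ext s <;> simp [hg, hh, add_comm]

def letters : Set (LampModel m) := {a, a⁻¹, t, t⁻¹}

section Letters

variable {x : LampModel m}

lemma natAbs_cursor_le_one (hx : x ∈ letters) : x.cursor.natAbs ≤ 1 := by
  rcases hx with rfl | rfl | rfl | rfl <;> simp

lemma eq_zero_and_cursor_eq_zero_of_lamps_ne_zero (hx : x ∈ letters) {s : ℤ}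
    (h : x.lamps s ≠ 0) : s = 0 ∧ x.cursor = 0 := by
  by_contra hs
  rcases hx with rfl | rfl | rfl | rfl <;> simp_all [Pi.single_apply]

lemma lamps_eq_zero_of_ne_zero (hx : x ∈ letters) {s : ℤ} (hs : s ≠ 0) : x.lamps s = 0 :=
  by_contra fun h => hs (eq_zero_and_cursor_eq_zero_of_lamps_ne_zero hx h).1

lemma eq_t_of_cursor_eq_one (hx : x ∈ letters) (h : x.cursor = 1) : x = t := by
  rcases hx with rfl | rfl | rfl | rfl <;> simp at h ⊢

lemma eq_t_inv_of_cursor_eq_neg_one (hx : x ∈ letters) (h : x.cursor = -1) : x = t⁻¹ := by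
  rcases hx with rfl | rfl | rfl | rfl <;> simp at h ⊢

lemma eq_a_of_lamps_zero_eq_one (hx : x ∈ letters) (h0 : x.cursor = 0) (h : x.lamps 0 = 1) :
    x = a := by
  rcases hx with rfl | rfl | rfl | rfl
  · rfl
  · ext s
    · by_cases hs : s = 0
      · subst hs; simpa using h
      · simp [hs]
    · simp
  all_goals simp at h0

end Letters

section Words

variable {l : List (LampModel m)}

lemma natAbs_cursor_prod_le_length (hl : ∀ x ∈ l, x ∈ letters) :
    l.prod.cursor.natAbs ≤ l.length := by
  induction l with
  | nil => simp
  | cons x l ih =>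
    have hx := natAbs_cursor_le_one (hl x List.mem_cons_self)
    have := ih fun y hy => hl y (List.mem_cons_of_mem x hy)
    simp only [List.prod_cons, mul_cursor, List.length_cons]
    omega

lemma eq_replicate_t_of_cursor_prod_eq_length (hl : ∀ x ∈ l, x ∈ letters)
    (h : l.prod.cursor = l.length) : l = List.replicate l.length t := by
  induction l with
  | nil => rfl
  | cons x l ih =>
    have hl' : ∀ y ∈ l, y ∈ letters := fun y hy => hl y (List.mem_cons_of_mem x hy)
    have hx := natAbs_cursor_le_one (hl x List.mem_cons_self)
    have := natAbs_cursor_prod_le_length hl'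
    simp only [List.prod_cons, mul_cursor, List.length_cons, Nat.cast_add, Nat.cast_one] at h
    rw [List.length_cons, List.replicate_succ, eq_t_of_cursor_eq_one (hl x List.mem_cons_self)
      (by omega), ← ih hl' (by omega)]

lemma eq_replicate_t_inv_of_cursor_prod_eq_neg_length (hl : ∀ x ∈ l, x ∈ letters)
    (h : l.prod.cursor = -l.length) : l = List.replicate l.length t⁻¹ := by
  induction l with
  | nil => rfl
  | cons x l ih =>
    have hl' : ∀ y ∈ l, y ∈ letters := fun y hy => hl y (List.mem_cons_of_mem x hy)
    have hx := natAbs_cursor_le_one (hl x List.mem_cons_self)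
    have := natAbs_cursor_prod_le_length hl'
    simp only [List.prod_cons, mul_cursor, List.length_cons, Nat.cast_add, Nat.cast_one] at h
    rw [List.length_cons, List.replicate_succ, eq_t_inv_of_cursor_eq_neg_one
      (hl x List.mem_cons_self) (by omega), ← ih hl' (by omega)]

lemma exists_eq_append_cons_of_lamps_prod_ne_zero (hl : ∀ x ∈ l, x ∈ letters) {s : ℤ}
    (hs : l.prod.lamps s ≠ 0) :
    ∃ u x w, l = u ++ x :: w ∧ x.cursor = 0 ∧ u.prod.cursor = s := by
  induction l generalizing s with
  | nil => simp at hs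
  | cons x l ih =>
    have hx := hl x List.mem_cons_self
    rw [List.prod_cons, mul_lamps] at hs
    by_cases hxs : x.lamps s = 0
    · rw [hxs, zero_add] at hs
      obtain ⟨u, y, w, rfl, hy, hu⟩ := ih (fun y hy => hl y (List.mem_cons_of_mem x hy)) hs
      exact ⟨x :: u, y, w, rfl, hy, by simp [hu]⟩
    · obtain ⟨rfl, hx0⟩ := eq_zero_and_cursor_eq_zero_of_lamps_ne_zero hx hxs
      exact ⟨[], x, l, rfl, hx0, rfl⟩

lemma exists_eq_append_cons_append_cons_of_lamps_prod_ne_zero (hl : ∀ x ∈ l, x ∈ letters)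
    {s s' : ℤ} (hss' : s ≠ s') (hs : l.prod.lamps s ≠ 0) (hs' : l.prod.lamps s' ≠ 0) :
    ∃ u x v y w, l = u ++ x :: (v ++ y :: w) ∧ x.cursor = 0 ∧ y.cursor = 0 ∧
      (u.prod.cursor = s ∧ u.prod.cursor + v.prod.cursor = s' ∨
        u.prod.cursor = s' ∧ u.prod.cursor + v.prod.cursor = s) := by
  induction l generalizing s s' with
  | nil => simp at hs
  | cons x l ih =>
    have hx := hl x List.mem_cons_self
    have hl' : ∀ y ∈ l, y ∈ letters := fun y hy => hl y (List.mem_cons_of_mem x hy)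
    rw [List.prod_cons, mul_lamps] at hs hs'
    by_cases hxs : x.lamps s = 0 <;> by_cases hxs' : x.lamps s' = 0
    · rw [hxs, zero_add] at hs
      rw [hxs', zero_add] at hs'
      obtain ⟨u, y, v, z, w, rfl, hy, hz, hpos⟩ := ih hl' (by omega) hs hs'
      refine ⟨x :: u, y, v, z, w, rfl, hy, hz, ?_⟩
      simp only [List.prod_cons, mul_cursor]
      omega
    · obtain ⟨rfl, hx0⟩ := eq_zero_and_cursor_eq_zero_of_lamps_ne_zero hx hxs'
      rw [hxs, zero_add] at hs
      obtain ⟨v, y, w, rfl, hy, hv⟩ := exists_eq_append_cons_of_lamps_prod_ne_zero hl' hs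
      exact ⟨[], x, v, y, w, rfl, hx0, hy, Or.inr ⟨rfl, by simp [hv, hx0]⟩⟩
    · obtain ⟨rfl, hx0⟩ := eq_zero_and_cursor_eq_zero_of_lamps_ne_zero hx hxs
      rw [hxs', zero_add] at hs'
      obtain ⟨v, y, w, rfl, hy, hv⟩ := exists_eq_append_cons_of_lamps_prod_ne_zero hl' hs'
      exact ⟨[], x, v, y, w, rfl, hx0, hy, Or.inl ⟨rfl, by simp [hv, hx0]⟩⟩
    · exact absurd ((eq_zero_and_cursor_eq_zero_of_lamps_ne_zero hx hxs).1.trans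
        (eq_zero_and_cursor_eq_zero_of_lamps_ne_zero hx hxs').1.symm) hss'

end Words

lemma cursor_prod_zigzagWord {x y : LampModel m} (hx : x.cursor = 0) (hy : y.cursor = 0)
    (j k : ℕ) : (zigzagWord x y t t⁻¹ j k).prod.cursor = j - 1 - k := by
  simp only [zigzagWord, List.cons_append, List.nil_append, List.append_assoc, List.prod_cons,
    List.prod_append, List.prod_replicate, t_pow, inv_pow, mul_cursor, inv_cursor, t_cursor, hx, hy,
    zero_add]
  ring

lemma lamps_prod_zigzagWord {x : LampModel m} (y : LampModel m) (hx : x.cursor = 0) (j k : ℕ)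
    (s : ℤ) :
    (zigzagWord x y t t⁻¹ j k).prod.lamps s = x.lamps (s + 1) + y.lamps (s + 1 - j) := by
  simp [zigzagWord, List.prod_append, List.prod_replicate, hx]

lemma exists_eq_zigzagWord {l : List (LampModel m)} {j k : ℕ}
    (hjk : k + 2 ≤ j) (hl : ∀ x ∈ l, x ∈ letters)
    (hleft : l.prod.lamps (-1) ≠ 0) (hright : l.prod.lamps (j - 1) ≠ 0)
    (hcursor : l.prod.cursor = j - 1 - k) (hlen : l.length ≤ j + k + 3) :
    ∃ x y, x ∈ letters ∧ y ∈ letters ∧ x.cursor = 0 ∧ y.cursor = 0 ∧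
      l = zigzagWord x y t t⁻¹ j k := by
  obtain ⟨u, x, v, y, w, rfl, hx, hy, hpos⟩ :=
    exists_eq_append_cons_append_cons_of_lamps_prod_ne_zero hl (by omega) hleft hright
  simp only [List.mem_append, List.mem_cons] at hl
  have hu : ∀ z ∈ u, z ∈ letters := fun z hz => hl z (by simp [hz])
  have hv : ∀ z ∈ v, z ∈ letters := fun z hz => hl z (by simp [hz])
  have hw : ∀ z ∈ w, z ∈ letters := fun z hz => hl z (by simp [hz])
  have hU := natAbs_cursor_prod_le_length hu
  have hV := natAbs_cursor_prod_le_length hv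
  have hW := natAbs_cursor_prod_le_length hw
  simp only [List.length_append, List.length_cons] at hlen
  simp only [List.prod_append, List.prod_cons, mul_cursor, hx, hy] at hcursor
  -- Visiting `j - 1` before `-1` costs at least `3 j - k - 1 > j + k + 1` cursor moves.
  rcases hpos with ⟨hUc, hVc⟩ | ⟨hUc, hVc⟩
  swap
  · omega
  have hlu : u.length = 1 := by omega
  have hlv : v.length = j := by omega
  have hlw : w.length = k := by omega
  refine ⟨x, y, hl x (by simp), hl y (by simp), hx, hy, ?_⟩
  rw [eq_replicate_t_inv_of_cursor_prod_eq_neg_length hu (by omega), hlu,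
    eq_replicate_t_of_cursor_prod_eq_length hv (by omega), hlv,
    eq_replicate_t_inv_of_cursor_prod_eq_neg_length hw (by omega), hlw]
  simp [zigzagWord]

theorem eq_zigzagWord_of_prod_eq [Nontrivial (ZMod m)] {l : List (LampModel m)} {j k : ℕ}
    (hjk : k + 2 ≤ j) (hl : ∀ x ∈ l, x ∈ letters)
    (hprod : l.prod = (zigzagWord a a t t⁻¹ j k).prod)
    (hlen : l.length ≤ j + k + 3) :
    l = zigzagWord a a t t⁻¹ j k := by
  have hlamps (s : ℤ) :
      l.prod.lamps s = (a : LampModel m).lamps (s + 1) + a.lamps (s + 1 - j) := by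
    rw [hprod, lamps_prod_zigzagWord _ a_cursor]
  have hleft : l.prod.lamps (-1) = 1 := by
    rw [hlamps, a_lamps, neg_add_cancel, Pi.single_eq_same, Pi.single_eq_of_ne (by omega), add_zero]
  have hright : l.prod.lamps (j - 1) = 1 := by
    rw [hlamps, a_lamps, sub_add_cancel, sub_self, Pi.single_eq_same, Pi.single_eq_of_ne (by omega),
      zero_add]
  obtain ⟨x, y, hxl, hyl, hx, hy, rfl⟩ := exists_eq_zigzagWord hjk hl
    (by simp [hleft]) (by simp [hright])
    (by rw [hprod, cursor_prod_zigzagWord a_cursor a_cursor])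
    hlen
  rw [lamps_prod_zigzagWord y hx, lamps_eq_zero_of_ne_zero hyl (by omega), neg_add_cancel,
    add_zero] at hleft
  rw [lamps_prod_zigzagWord y hx, lamps_eq_zero_of_ne_zero hxl (by omega), sub_add_cancel,
    sub_self, zero_add] at hright
  rw [eq_a_of_lamps_zero_eq_one hxl hx hleft, eq_a_of_lamps_zero_eq_one hyl hy hright]

end LampModel

section Presentation

variable {m : ℕ}

lemma mk_eq_one_of_mem_lampRels {r : FreeGroup Bool} (hr : r ∈ lampRels m) :
    PresentedGroup.mk (lampRels m) r = 1 :=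
  (QuotientGroup.eq_one_iff r).2 (Subgroup.subset_normalClosure hr)

lemma la_pow_eq_one : la m ^ m = 1 := by
  have h := mk_eq_one_of_mem_lampRels (m := m) (Or.inl rfl)
  rwa [map_pow] at h

lemma commute_conj_la (i j : ℤ) :
    Commute (lt m ^ i * la m * lt m ^ (-i)) (lt m ^ j * la m * lt m ^ (-j)) := by
  have h := mk_eq_one_of_mem_lampRels (m := m) (Or.inr ⟨i, j, rfl⟩)
  simp only [map_commutatorElement, map_mul, map_zpow] at h
  exact commutatorElement_eq_one_iff_commute.1 h

noncomputable def toModel (m : ℕ) : Lamp m →* LampModel m :=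
  PresentedGroup.toGroup (f := fun b => if b then LampModel.a else LampModel.t) (by
    rintro r (rfl | ⟨i, j, rfl⟩)
    · ext s <;> simp [LampModel.a_pow]
    · simp only [map_commutatorElement, map_mul, map_zpow, FreeGroup.lift_apply_of]
      exact commutatorElement_eq_one_iff_commute.2
        (LampModel.commute_of_cursor_eq_zero (by simp) (by simp)))

@[simp] lemma toModel_la : toModel m (la m) = LampModel.a := PresentedGroup.toGroup.of _
@[simp] lemma toModel_lt : toModel m (lt m) = LampModel.t := PresentedGroup.toGroup.of _

lemma lt_inv_mul_la_mul_lt_pow_mul_la_mul_lt_inv_pow (n : ℕ) :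
    (lt m)⁻¹ * la m * lt m ^ (n + 1) * la m * (lt m)⁻¹ ^ (n + 1) =
      lt m ^ n * la m * (lt m)⁻¹ ^ (n + 1) * la m := by
  have h := (commute_conj_la (m := m) (-1) n).eq
  calc (lt m)⁻¹ * la m * lt m ^ (n + 1) * la m * (lt m)⁻¹ ^ (n + 1)
      = (lt m ^ (-1 : ℤ) * la m * lt m ^ (-(-1) : ℤ)) * (lt m ^ (n : ℤ) * la m * lt m ^ (-n : ℤ)) *
          lt m ^ (-1 : ℤ) := by group
    _ = (lt m ^ (n : ℤ) * la m * lt m ^ (-n : ℤ)) * (lt m ^ (-1 : ℤ) * la m * lt m ^ (-(-1) : ℤ)) *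
          lt m ^ (-1 : ℤ) := by rw [h]
    _ = lt m ^ n * la m * (lt m)⁻¹ ^ (n + 1) * la m := by group

lemma la_inv_eq_la_of_a_inv_eq_a (h : (LampModel.a : LampModel m)⁻¹ = LampModel.a) :
    (la m)⁻¹ = la m := by
  have h2 : ((2 : ℕ) : ZMod m) = 0 := by
    have := congrArg (fun g => g.lamps 0) h
    simp only [LampModel.inv_lamps, LampModel.a_lamps, LampModel.a_cursor, add_zero,
      Pi.single_eq_same] at this
    push_cast
    linear_combination -this
  obtain ⟨c, hc⟩ := (ZMod.natCast_eq_zero_iff 2 m).1 h2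
  have hsq : la m * la m = 1 := by rw [← sq, hc, pow_mul, la_pow_eq_one, one_pow]
  exact inv_eq_of_mul_eq_one_left hsq

end Presentation

abbrev Letter (m : ℕ) :=
  {x : Lamp m // x ∈ ({la m, lt m} : Set (Lamp m)) ∨ x⁻¹ ∈ ({la m, lt m} : Set (Lamp m))}

namespace Letter

variable {m : ℕ}

noncomputable def a : Letter m := ⟨la m, Or.inl (by simp)⟩
noncomputable def t : Letter m := ⟨lt m, Or.inl (by simp)⟩
noncomputable def tInv : Letter m := ⟨(lt m)⁻¹, Or.inr (by simp)⟩

lemma val_eq (x : Letter m) :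
    x.val = la m ∨ x.val = (la m)⁻¹ ∨ x.val = lt m ∨ x.val = (lt m)⁻¹ := by
  rcases x with ⟨x, (rfl | rfl) | (h | h)⟩
  · exact Or.inl rfl
  · exact Or.inr (Or.inr (Or.inl rfl))
  · exact Or.inr (Or.inl (inv_eq_iff_eq_inv.1 h))
  · exact Or.inr (Or.inr (Or.inr (inv_eq_iff_eq_inv.1 h)))

lemma toModel_val_mem_letters (x : Letter m) : toModel m x.val ∈ LampModel.letters := by
  rcases val_eq x with h | h | h | h <;> simp [h, LampModel.letters]

lemma toModel_val_injective : Function.Injective (fun x : Letter m => toModel m x.val) := by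
  intro x y h
  apply Subtype.ext
  have hc := congrArg LampModel.cursor h
  rcases val_eq x with hx | hx | hx | hx <;> rcases val_eq y with hy | hy | hy | hy <;>
    simp only [hx, hy, map_inv, toModel_la, toModel_lt] at h hc ⊢ <;>
    simp only [LampModel.a_cursor, LampModel.t_cursor, LampModel.inv_cursor, neg_zero, neg_eq_zero,
      zero_eq_neg, zero_ne_one, one_ne_zero, Int.reduceNeg, reduceCtorEq] at hc
  · exact (la_inv_eq_la_of_a_inv_eq_a h.symm).symm
  · exact la_inv_eq_la_of_a_inv_eq_a h

theorem eq_zigzagWord_of_prod_eq [Nontrivial (ZMod m)] {w : List (Letter m)} {j k : ℕ}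
    (hjk : k + 2 ≤ j)
    (hprod : (w.map Subtype.val).prod =
      ((zigzagWord a a t tInv j k : List (Letter m)).map Subtype.val).prod)
    (hlen : w.length ≤ j + k + 3) :
    w = zigzagWord a a t tInv j k := by
  have hmap : (zigzagWord a a t tInv j k).map (fun x : Letter m => toModel m x.val) =
      zigzagWord LampModel.a LampModel.a LampModel.t LampModel.t⁻¹ j k := by
    simp [zigzagWord, a, t, tInv]
  have hprod_map (v : List (Letter m)) :
      (v.map fun x => toModel m x.val).prod = toModel m (v.map Subtype.val).prod := by
    rw [map_list_prod, List.map_map]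
    rfl
  apply List.map_injective_iff.2 toModel_val_injective
  rw [hmap]
  refine LampModel.eq_zigzagWord_of_prod_eq hjk ?_ ?_ ?_
  · simp only [List.mem_map]
    rintro _ ⟨x, -, rfl⟩
    exact toModel_val_mem_letters x
  · rw [← hmap, hprod_map, hprod_map, hprod]
  · rwa [List.length_map]

lemma wordLength_lt_length_zigzagWord_self (n : ℕ) :
    wordLength {la m, lt m} ((zigzagWord a a t tInv (n + 1) (n + 1)).map Subtype.val).prod <
      (zigzagWord (a : Letter m) a t tInv (n + 1) (n + 1)).length := by
  have hshort : ((zigzagWord a a t tInv (n + 1) (n + 1)).map Subtype.val).prod =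
      ((List.replicate n t ++ [a] ++ List.replicate (n + 1) tInv ++ [(a : Letter m)]).map
        Subtype.val).prod := by
    simpa [zigzagWord, a, t, tInv, List.prod_append, List.prod_replicate, mul_assoc] using
      lt_inv_mul_la_mul_lt_pow_mul_la_mul_lt_inv_pow n
  rw [hshort]
  refine (wordLength_le_length _).trans_lt ?_
  simp only [List.length_append, List.length_replicate, List.length_singleton, length_zigzagWord]
  omega

end Letter

open Letter in
/-- The lamplighter group `L_m` (`m ≥ 2`) with the wreath product generating set `{a, t}`
has no regular language of geodesics: there is no regular language over the alphabet
`{a^{±1}, t^{±1}}` consisting of geodesic words and containing at least one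
representative of every group element. -/
theorem lamplighter_no_regular_geodesic_language (m : ℕ) (hm : 2 ≤ m) :
    letI S : Set (Lamp m) := {la m, lt m}
    ¬ ∃ L : Language {x : Lamp m // x ∈ S ∨ x⁻¹ ∈ S},
        L.IsRegular ∧
        (∀ w ∈ L, (w.map Subtype.val).length = wordLength S (w.map Subtype.val).prod) ∧
        (∀ g : Lamp m, ∃ w ∈ L, (w.map Subtype.val).prod = g) := by
  rintro ⟨L, hreg, hgeo, hsurj⟩
  have : Fact (1 < m) := ⟨hm⟩
  have zigzagWord_mem {j k : ℕ} (hjk : k + 2 ≤ j) : zigzagWord a a t tInv j k ∈ L := by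
    obtain ⟨w, hwL, hw⟩ := hsurj ((zigzagWord a a t tInv j k).map Subtype.val).prod
    have hlen := hgeo w hwL
    rw [hw, List.length_map] at hlen
    rwa [← eq_zigzagWord_of_prod_eq hjk hw
      (hlen ▸ (wordLength_le_length _).trans_eq (length_zigzagWord ..))]
  -- Odd exponents make the two prefixes below differ by at least two `t`s.
  obtain ⟨i, j, hij, hquot⟩ := Set.Finite.exists_lt_map_eq_of_forall_mem
    (f := fun n => L.leftQuotient ([tInv, a] ++ List.replicate (2 * n + 1) t ++ [a]))
    (fun n => Set.mem_range_self _) hreg.finite_range_leftQuotient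
  have hmem : zigzagWord a a t tInv (2 * i + 1) (2 * i + 1) ∈ L := by
    have := zigzagWord_mem (j := 2 * j + 1) (k := 2 * i + 1) (by omega)
    exact (congrArg (List.replicate (2 * i + 1) tInv ∈ ·) hquot).mpr this
  have hlen := hgeo _ hmem
  rw [List.length_map] at hlen
  exact (wordLength_lt_length_zigzagWord_self (2 * i)).ne' hlen
end

section
/- In the lamplighter group L₂ = ℤ₂ ≀ ℤ with the automata generating set {t, ta}, for n ≥ 1 the element g_n = (t^n a t^{-n})(t^{-n} a t^{n}) has word length exactly 4n + 2. -/
/-! `L₂` acts on states `(f, p)`, a finitely supported lamp configuration and the position of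
the lamplighter, with `a` toggling the lamp at `p` and `t` moving one step to the right. Since
`(t a)^{±1}` can only toggle the lamp at the left end of the edge it crosses, the length of the
shortest walk from `0` that crosses all edges needed to light `f` and ends at `p` moves by at
most one per letter. It is therefore a lower bound for word length; for `gₙ • (0, 0)` it is
`4n + 2`, which an explicit word attains. -/

open scoped commutatorElement

def IsWord {G : Type*} [Group G] (S : Set G) (l : List G) : Prop :=
  ∀ x ∈ l, x ∈ S ∨ x⁻¹ ∈ S

section WordLength

variable {G α : Type*} [Group G] [MulAction G α] {S : Set G}

theorem wordLength_le_length_s7 {l : List G} (hl : IsWord S l) : wordLength S l.prod ≤ l.length :=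
  Nat.sInf_le ⟨l, hl, rfl, rfl⟩

theorem potential_list_prod_smul_le {φ : α → ℕ}
    (hφ : ∀ s ∈ S, ∀ x, φ (s • x) ≤ φ x + 1 ∧ φ (s⁻¹ • x) ≤ φ x + 1)
    {l : List G} (hl : IsWord S l) (x : α) : φ (l.prod • x) ≤ φ x + l.length := by
  induction l with
  | nil => simp
  | cons s l ih =>
    have hstep : φ (s • l.prod • x) ≤ φ (l.prod • x) + 1 := by
      rcases hl s List.mem_cons_self with hs | hs
      · exact (hφ s hs _).1
      · simpa using (hφ s⁻¹ hs (l.prod • x)).2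
    have := ih fun y hy => hl y (List.mem_cons_of_mem _ hy)
    rw [List.prod_cons, mul_smul, List.length_cons]
    omega

theorem wordLength_eq_of_le_potential {φ : α → ℕ}
    (hφ : ∀ s ∈ S, ∀ x, φ (s • x) ≤ φ x + 1 ∧ φ (s⁻¹ • x) ≤ φ x + 1)
    {l : List G} (hl : IsWord S l) (x : α) (h : φ x + l.length ≤ φ (l.prod • x)) :
    wordLength S l.prod = l.length := by
  refine le_antisymm (wordLength_le_length_s7 hl) ?_
  obtain ⟨l', hl', hlen, hprod⟩ :
      ∃ l', IsWord S l' ∧ l'.length = wordLength S l.prod ∧ l'.prod = l.prod :=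
    Nat.sInf_mem (s := {n | ∃ l' : List G, IsWord S l' ∧ l'.length = n ∧ l'.prod = l.prod})
      ⟨_, l, hl, rfl, rfl⟩
  have := potential_list_prod_smul_le hφ hl' x
  rw [hprod, hlen] at this
  omega

end WordLength

theorem Finsupp.sup_support_add_single_le {ι M : Type*} [DecidableEq ι] [AddZeroClass M]
    (f : ι →₀ M) (i : ι) (c : M) (g : ι → ℕ) :
    (f + Finsupp.single i c).support.sup g ≤ max (f.support.sup g) (g i) := by
  calc (f + Finsupp.single i c).support.sup g
      ≤ (f.support ∪ {i}).sup g :=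
        Finset.sup_mono (Finsupp.support_add.trans
          (Finset.union_subset_union_right Finsupp.support_single_subset))
    _ = max (f.support.sup g) (g i) := by rw [Finset.sup_union, Finset.sup_singleton]

namespace Lamplighter

open Finsupp

abbrev State := (ℤ →₀ ZMod 2) × ℤ

theorem add_single_add_single (f : ℤ →₀ ZMod 2) (k : ℤ) :
    f + single k 1 + single k 1 = f := by
  rw [add_assoc, ← single_add, show (1 + 1 : ZMod 2) = 0 from rfl, single_zero, add_zero]

noncomputable def toggle : Equiv.Perm State :=
  Function.Involutive.toPerm (fun s => (s.1 + single s.2 1, s.2))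
    fun s => Prod.ext (add_single_add_single s.1 s.2) rfl

def shift : Equiv.Perm State where
  toFun s := (s.1, s.2 + 1)
  invFun s := (s.1, s.2 - 1)
  left_inv s := by simp
  right_inv s := by simp

theorem toggle_apply (s : State) : toggle s = (s.1 + single s.2 1, s.2) := rfl

theorem shift_zpow_apply (i : ℤ) (s : State) : (shift ^ i) s = (s.1, s.2 + i) := by
  induction i using Int.induction_on generalizing s with
  | zero => simp
  | succ i ih => rw [zpow_add_one, Equiv.Perm.mul_apply, ih]; simp [shift]; ring
  | pred i ih => rw [zpow_sub_one, Equiv.Perm.mul_apply, ih]; simp [shift]; ring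

noncomputable def generatorPerm (b : Bool) : Equiv.Perm State := bif b then toggle else shift

theorem lift_generatorPerm_conj_apply (i : ℤ) (s : State) :
    FreeGroup.lift generatorPerm
        (FreeGroup.of false ^ i * FreeGroup.of true * FreeGroup.of false ^ (-i)) s =
      (s.1 + single (s.2 - i) 1, s.2) := by
  simp only [map_mul, map_zpow, FreeGroup.lift_apply_of, generatorPerm, cond_false, cond_true,
    Equiv.Perm.mul_apply, shift_zpow_apply, toggle_apply]
  simp [sub_eq_add_neg]

theorem lift_generatorPerm_eq_one : ∀ r ∈ lampRels 2, FreeGroup.lift generatorPerm r = 1 := by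
  rintro r (rfl | ⟨i, j, rfl⟩)
  · ext s : 1
    simp [generatorPerm, sq, toggle_apply, add_single_add_single]
  · rw [map_commutatorElement, commutatorElement_eq_one_iff_mul_comm]
    ext s : 1
    simp only [Equiv.Perm.mul_apply, lift_generatorPerm_conj_apply, add_right_comm]

noncomputable def lampAction : Lamp 2 →* Equiv.Perm State :=
  PresentedGroup.toGroup lift_generatorPerm_eq_one

noncomputable instance : MulAction (Lamp 2) State := .compHom State lampAction

theorem la_smul (s : State) : la 2 • s = (s.1 + single s.2 1, s.2) :=
  congrArg (· s) (PresentedGroup.toGroup.of lift_generatorPerm_eq_one)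

theorem lt_zpow_smul (i : ℤ) (s : State) : lt 2 ^ i • s = (s.1, s.2 + i) := by
  show lampAction (lt 2 ^ i) s = _
  rw [map_zpow, lt, lampAction, PresentedGroup.toGroup.of]
  exact shift_zpow_apply i s

theorem lt_smul (s : State) : lt 2 • s = (s.1, s.2 + 1) := by
  simpa using lt_zpow_smul 1 s

theorem lt_inv_smul (s : State) : (lt 2)⁻¹ • s = (s.1, s.2 - 1) := by
  simpa [sub_eq_add_neg] using lt_zpow_smul (-1) s

theorem lt_pow_smul (n : ℕ) (s : State) : lt 2 ^ n • s = (s.1, s.2 + n) := by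
  simpa using lt_zpow_smul n s

theorem lt_pow_inv_smul (n : ℕ) (s : State) : (lt 2 ^ n)⁻¹ • s = (s.1, s.2 - n) := by
  simpa [sub_eq_add_neg] using lt_zpow_smul (-n) s

theorem la_inv_smul (s : State) : (la 2)⁻¹ • s = (s.1 + single s.2 1, s.2) := by
  rw [inv_smul_eq_iff, la_smul, add_single_add_single]

noncomputable def rightReach (f : ℤ →₀ ZMod 2) : ℕ := f.support.sup fun i => (i + 1).toNat

noncomputable def leftReach (f : ℤ →₀ ZMod 2) : ℕ := f.support.sup fun i => (-i).toNat

/-- With `R = max (p, rightReach f)` and `L = max (-p, leftReach f)`, this is the length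
`2 (R + L) - |p|` of the shortest walk from `0` that visits `[-L, R]` and ends at `p`. -/
noncomputable def tourLength (s : State) : ℕ :=
  2 * (max s.2.toNat (rightReach s.1) + max (-s.2).toNat (leftReach s.1)) - s.2.natAbs

theorem tourLength_zero : tourLength (0, 0) = 0 := by
  simp [tourLength, rightReach, leftReach]

theorem tourLength_smul_le : ∀ g ∈ ({lt 2, lt 2 * la 2} : Set (Lamp 2)), ∀ x,
    tourLength (g • x) ≤ tourLength x + 1 ∧ tourLength (g⁻¹ • x) ≤ tourLength x + 1 := by
  simp only [Set.mem_insert_iff, Set.mem_singleton_iff, forall_eq_or_imp, forall_eq, mul_inv_rev,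
    mul_smul, lt_smul, la_smul, lt_inv_smul, la_inv_smul]
  refine ⟨fun ⟨f, p⟩ => ?_, fun ⟨f, p⟩ => ?_⟩
  all_goals
    have := sup_support_add_single_le f p 1 fun i => (i + 1).toNat
    have := sup_support_add_single_le f p 1 fun i => (-i).toNat
    have := sup_support_add_single_le f (p - 1) 1 fun i => (i + 1).toNat
    have := sup_support_add_single_le f (p - 1) 1 fun i => (-i).toNat
    simp only [tourLength, rightReach, leftReach] at *
    omega

theorem four_mul_add_two_le_tourLength {n : ℕ} (hn : 1 ≤ n) :
    4 * n + 2 ≤ tourLength (single (n : ℤ) 1 + single (-n : ℤ) 1, 0) := by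
  have hne : (-n : ℤ) ≠ n := by omega
  have hright := Finset.le_sup (f := fun i : ℤ => (i + 1).toNat)
    (s := (single (n : ℤ) (1 : ZMod 2) + single (-n : ℤ) 1).support) (b := n) (by simp [hne.symm])
  have hleft := Finset.le_sup (f := fun i : ℤ => (-i).toNat)
    (s := (single (n : ℤ) (1 : ZMod 2) + single (-n : ℤ) 1).support) (b := -n) (by simp [hne])
  simp only [tourLength, rightReach, leftReach] at *
  omega

noncomputable def gn (n : ℕ) : Lamp 2 :=
  lt 2 ^ n * la 2 * (lt 2 ^ n)⁻¹ * ((lt 2 ^ n)⁻¹ * la 2 * lt 2 ^ n)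

theorem gn_smul_zero (n : ℕ) :
    gn n • ((0, 0) : State) = (single (n : ℤ) 1 + single (-n : ℤ) 1, 0) := by
  simp [gn, mul_smul, lt_pow_smul, lt_pow_inv_smul, la_smul, add_comm]

/-- Read right to left: walk to `m + 1`, light it while stepping to `m + 2`, walk to `-(m + 1)`,
light it while stepping to `-m` and return to `0`. -/
noncomputable def gnWord (m : ℕ) : List (Lamp 2) :=
  List.replicate m (lt 2) ++ [lt 2 * la 2] ++ List.replicate (2 * m + 3) (lt 2)⁻¹ ++
    [lt 2 * la 2] ++ List.replicate (m + 1) (lt 2)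

theorem gnWord_prod (m : ℕ) : (gnWord m).prod = gn (m + 1) := by
  simp only [gnWord, gn, List.prod_append, List.prod_replicate, List.prod_singleton]
  group

theorem gnWord_length (m : ℕ) : (gnWord m).length = 4 * (m + 1) + 2 := by
  simp only [gnWord, List.length_append, List.length_replicate, List.length_singleton]
  omega

theorem isWord_gnWord (m : ℕ) : IsWord {lt 2, lt 2 * la 2} (gnWord m) := by
  intro x hx
  simp only [gnWord, List.mem_append, List.mem_replicate, List.mem_singleton] at hx
  rcases hx with (((⟨-, rfl⟩ | rfl) | ⟨-, rfl⟩) | rfl) | ⟨-, rfl⟩ <;> simp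

end Lamplighter

/-- In `L₂` with the automata generating set `{t, ta}`, the element
`gₙ = (tⁿ a t⁻ⁿ)(t⁻ⁿ a tⁿ)` has word length exactly `4n + 2` for `n ≥ 1`. -/
theorem lamplighter_automata_gn_wordLength (n : ℕ) (hn : 1 ≤ n) :
    wordLength {lt 2, lt 2 * la 2}
      ((lt 2) ^ n * la 2 * ((lt 2) ^ n)⁻¹ * (((lt 2) ^ n)⁻¹ * la 2 * (lt 2) ^ n)) =
      4 * n + 2 := by
  obtain ⟨m, rfl⟩ : ∃ m, n = m + 1 := ⟨n - 1, by omega⟩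
  change wordLength _ (Lamplighter.gn (m + 1)) = _
  rw [← Lamplighter.gnWord_prod, ← Lamplighter.gnWord_length]
  refine wordLength_eq_of_le_potential Lamplighter.tourLength_smul_le
    (Lamplighter.isWord_gnWord m) (0, 0) ?_
  rw [Lamplighter.gnWord_prod, Lamplighter.gn_smul_zero, Lamplighter.gnWord_length,
    Lamplighter.tourLength_zero, zero_add]
  exact Lamplighter.four_mul_add_two_le_tourLength hn
end

section
/- A group with finitely many cone types with respect to a finite generating set S has a regular full language of geodesics: the set of all geodesic words over S^{±1} is accepted by a finite automaton. -/
/-- The cone type of `g` with respect to the generating set `S`: the set of words `u`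
over `S ∪ S⁻¹` all of whose prefixes extend `g` geodesically. -/
noncomputable def coneType {G : Type*} [Group G] (S : Set G) (g : G) : Set (List G) :=
  {u | (∀ x ∈ u, x ∈ S ∨ x⁻¹ ∈ S) ∧
    ∀ k ≤ u.length, wordLength S (g * (u.take k).prod) = wordLength S g + k}

section Aux

variable {G : Type*} [Group G] (S : Set G)

lemma wl_le {l : List G} (hl : ∀ x ∈ l, x ∈ S ∨ x⁻¹ ∈ S) :
    wordLength S l.prod ≤ l.length :=
  Nat.sInf_le ⟨l, hl, rfl, rfl⟩

lemma wl_exists {g : G} (h : ∃ l : List G, (∀ x ∈ l, x ∈ S ∨ x⁻¹ ∈ S) ∧ l.prod = g) :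
    ∃ m : List G, (∀ x ∈ m, x ∈ S ∨ x⁻¹ ∈ S) ∧ m.length = wordLength S g ∧ m.prod = g := by
  obtain ⟨l, hl, hp⟩ := h
  have hmem : l.length ∈
      {n | ∃ l : List G, (∀ x ∈ l, x ∈ S ∨ x⁻¹ ∈ S) ∧ l.length = n ∧ l.prod = g} :=
    ⟨l, hl, rfl, hp⟩
  exact Nat.sInf_mem ⟨_, hmem⟩

lemma wl_one : wordLength S 1 = 0 :=
  Nat.eq_zero_of_le_zero (Nat.sInf_le ⟨[], by simp, rfl, rfl⟩)

lemma wl_mul_le {l m : List G} (hl : ∀ x ∈ l, x ∈ S ∨ x⁻¹ ∈ S)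
    (hm : ∀ x ∈ m, x ∈ S ∨ x⁻¹ ∈ S) :
    wordLength S (l.prod * m.prod) ≤ wordLength S l.prod + wordLength S m.prod := by
  obtain ⟨l', hl', hll, hlp⟩ := wl_exists S ⟨l, hl, rfl⟩
  obtain ⟨m', hm', hml, hmp⟩ := wl_exists S ⟨m, hm, rfl⟩
  calc wordLength S (l.prod * m.prod) ≤ (l' ++ m').length := by
        refine Nat.sInf_le ⟨l' ++ m', ?_, rfl, by simp [hlp, hmp]⟩
        intro x hx
        rcases List.mem_append.mp hx with h | h
        · exact hl' x h
        · exact hm' x h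
    _ = wordLength S l.prod + wordLength S m.prod := by simp [hll, hml]

/-- Prefixes of geodesic words are geodesic. -/
lemma geo_take {l : List G} (hl : ∀ x ∈ l, x ∈ S ∨ x⁻¹ ∈ S)
    (hg : wordLength S l.prod = l.length) (k : ℕ) :
    wordLength S (l.take k).prod = (l.take k).length := by
  have htl : ∀ x ∈ l.take k, x ∈ S ∨ x⁻¹ ∈ S := fun x hx => hl x (List.mem_of_mem_take hx)
  have hdl : ∀ x ∈ l.drop k, x ∈ S ∨ x⁻¹ ∈ S := fun x hx => hl x (List.mem_of_mem_drop hx)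
  have h1 : wordLength S (l.take k).prod ≤ (l.take k).length := wl_le S htl
  have h2 : wordLength S (l.drop k).prod ≤ (l.drop k).length := wl_le S hdl
  have h3 := wl_mul_le S htl hdl
  have h4 : (l.take k).prod * (l.drop k).prod = l.prod := by
    rw [← List.prod_append, List.take_append_drop]
  have h5 : (l.take k).length + (l.drop k).length = l.length := by
    rw [← List.length_append, List.take_append_drop]
  rw [h4] at h3
  omega

lemma singleton_mem_coneType_iff {g a : G} :
    [a] ∈ coneType S g ↔ (a ∈ S ∨ a⁻¹ ∈ S) ∧ wordLength S (g * a) = wordLength S g + 1 := by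
  constructor
  · rintro ⟨hl, h⟩
    exact ⟨hl a (by simp), by simpa using h 1 (by simp)⟩
  · rintro ⟨ha, h⟩
    refine ⟨by simpa using ha, fun k hk => ?_⟩
    have hk1 : k ≤ 1 := by simpa using hk
    interval_cases k
    · simp
    · simpa using h

lemma coneType_mul (g a : G) (ha : a ∈ S ∨ a⁻¹ ∈ S)
    (hga : wordLength S (g * a) = wordLength S g + 1) :
    coneType S (g * a) = {u | a :: u ∈ coneType S g} := by
  ext u
  simp only [coneType, Set.mem_setOf_eq]
  constructor
  · rintro ⟨hu, h⟩
    refine ⟨?_, fun k hk => ?_⟩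
    · intro x hx
      rcases List.mem_cons.mp hx with rfl | hx
      · exact ha
      · exact hu x hx
    · match k with
      | 0 => simp
      | k + 1 =>
        have hk' : k ≤ u.length := by simpa using hk
        have := h k hk'
        simp only [List.take_succ_cons, List.prod_cons, ← mul_assoc]
        omega
  · rintro ⟨hu, h⟩
    refine ⟨fun x hx => hu x (List.mem_cons_of_mem a hx), fun k hk => ?_⟩
    have := h (k + 1) (by simpa using hk)
    simp only [List.take_succ_cons, List.prod_cons, ← mul_assoc] at this
    omega

lemma step_mem {C : Set (List G)} (hC : C ∈ Set.range (coneType S)) {a : G} (h : [a] ∈ C) :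
    {u | a :: u ∈ C} ∈ Set.range (coneType S) := by
  obtain ⟨g, rfl⟩ := hC
  obtain ⟨ha, hga⟩ := (singleton_mem_coneType_iff S).mp h
  exact ⟨g * a, coneType_mul S g a ha hga⟩

open Classical in
/-- The cone-type automaton. -/
noncomputable def coneDFA : DFA {x : G // x ∈ S ∨ x⁻¹ ∈ S} (Option ↥(Set.range (coneType S))) where
  step s a := s.bind fun C =>
    if h : [a.val] ∈ C.val then some ⟨{u | a.val :: u ∈ C.val}, step_mem S C.2 h⟩ else none
  start := some ⟨coneType S 1, Set.mem_range_self 1⟩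
  accept := {s | s.isSome}

open Classical in
lemma coneDFA_step_some {C : Set (List G)} (hC : C ∈ Set.range (coneType S))
    (a : {x : G // x ∈ S ∨ x⁻¹ ∈ S}) :
    (coneDFA S).step (some ⟨C, hC⟩) a =
      if h : [a.val] ∈ C then some ⟨{u | a.val :: u ∈ C}, step_mem S hC h⟩ else none := rfl

lemma coneDFA_step_none (a : {x : G // x ∈ S ∨ x⁻¹ ∈ S}) :
    (coneDFA S).step none a = none := rfl

lemma coneDFA_eval (w : List {x : G // x ∈ S ∨ x⁻¹ ∈ S}) :
    (coneDFA S).eval w =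
      if wordLength S (w.map Subtype.val).prod = (w.map Subtype.val).length
      then some ⟨coneType S (w.map Subtype.val).prod, Set.mem_range_self _⟩
      else none := by
  induction w using List.reverseRecOn with
  | nil =>
    rw [if_pos (by simp [wl_one S])]
    simp [coneDFA, DFA.eval]
  | append_singleton w a ih =>
    rw [DFA.eval_append_singleton, ih]
    set m := w.map Subtype.val with hmdef
    have hm : ∀ x ∈ m, x ∈ S ∨ x⁻¹ ∈ S := by
      intro x hx
      obtain ⟨y, _, rfl⟩ := List.mem_map.mp hx
      exact y.2
    have hm' : ∀ x ∈ (w ++ [a]).map Subtype.val, x ∈ S ∨ x⁻¹ ∈ S := by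
      intro x hx
      obtain ⟨y, _, rfl⟩ := List.mem_map.mp hx
      exact y.2
    have hp : ((w ++ [a]).map Subtype.val).prod = m.prod * a.val := by simp [hmdef]
    have hlen : ((w ++ [a]).map Subtype.val).length = m.length + 1 := by simp [hmdef]
    by_cases hgeo : wordLength S m.prod = m.length
    · rw [if_pos hgeo]
      rw [coneDFA_step_some]
      by_cases hx : [a.val] ∈ coneType S m.prod
      · rw [dif_pos hx]
        obtain ⟨ha, hga⟩ := (singleton_mem_coneType_iff S).mp hx
        have hgeo' : wordLength S ((w ++ [a]).map Subtype.val).prod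
            = ((w ++ [a]).map Subtype.val).length := by
          rw [hp, hlen, hga, hgeo]
        rw [if_pos hgeo']
        congr 1
        refine Subtype.ext ?_
        rw [hp]
        exact (coneType_mul S m.prod a.val ha hga).symm
      · rw [dif_neg hx, if_neg]
        intro hgeo'
        apply hx
        rw [singleton_mem_coneType_iff]
        refine ⟨a.2, ?_⟩
        rw [hp, hlen] at hgeo'
        omega
    · rw [if_neg hgeo, coneDFA_step_none, if_neg]
      intro hgeo'
      apply hgeo
      have := geo_take S hm' hgeo' m.length
      rw [show ((w ++ [a]).map Subtype.val).take m.length = m by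
        simp [hmdef, List.take_left]] at this
      exact this

end Aux

/-- If a group has finitely many cone types with respect to a finite generating set `S`,
then the full language of geodesic words over `S ∪ S⁻¹` is regular. -/
theorem finitely_many_cone_types_full_geodesic_language_regular {G : Type*} [Group G]
    (S : Set G) (hS : S.Finite) (hcone : (Set.range (coneType S)).Finite) :
    Language.IsRegular
      (show Language {x : G // x ∈ S ∨ x⁻¹ ∈ S} from
        {w | (w.map Subtype.val).length = wordLength S (w.map Subtype.val).prod}) := by
  classical
  haveI : Fintype ↥(Set.range (coneType S)) := hcone.fintype
  obtain ⟨n, ⟨e⟩⟩ : ∃ n, Nonempty (Option ↥(Set.range (coneType S)) ≃ Fin n) :=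
    ⟨_, ⟨Fintype.equivFin _⟩⟩
  refine ⟨Fin n, inferInstance, DFA.reindex e (coneDFA S), ?_⟩
  rw [DFA.accepts_reindex]
  ext w
  rw [DFA.mem_accepts, coneDFA_eval]
  by_cases h : wordLength S (w.map Subtype.val).prod = (w.map Subtype.val).length
  · rw [if_pos h]
    exact ⟨fun _ => h.symm, fun _ => rfl⟩
  · rw [if_neg h]
    refine ⟨fun hmem => absurd hmem (by simp [coneDFA]), fun hmem => ?_⟩
    exact absurd (show (w.map Subtype.val).length
      = wordLength S (w.map Subtype.val).prod from hmem).symm h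
end
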